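/- Let T1 and T2 be trees on the same label set 𝒳 and let X ⊆ 𝒳. Then T1 − X = T2 − X if and only if there is an LPR sequence (x1, x2, …, xk) turning T1 into T2 such that X = {x1, …, xk}. -/

import Mathlib

/-!
Common framework: rooted binary trees with leaves bijectively labeled by a
finite label set, leaf removal, restriction, the leaf-removal distance `d_LR`,
compatibility, leaf-disagreements, triplets, LPR moves, etc.
-/

universe u

/-- A rooted binary tree whose leaves carry labels from `α`. -/
inductive LTree (α : Type u) : Type u where
  | leaf : α → LTree α
  | node : LTree α → LTree α → LTree α

namespace LTree

variable {α : Type u} [DecidableEq α]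

/-- The set of leaf labels of a tree. -/
def labels : LTree α → Finset α
  | leaf a => {a}
  | node l r => labels l ∪ labels r

/-- A tree is `Good` when its leaves carry pairwise distinct labels
(i.e. the leaves are bijectively labeled). -/
def Good : LTree α → Prop
  | leaf _ => True
  | node l r => Good l ∧ Good r ∧ Disjoint (labels l) (labels r)

/-- `T` is a (rooted binary, uniquely leaf-labeled) tree on label set `𝒳`. -/
def IsTreeOn (T : LTree α) (𝒳 : Finset α) : Prop :=
  Good T ∧ labels T = 𝒳

/-- Equality of rooted trees: children of a node are unordered. -/
inductive Iso : LTree α → LTree α → Prop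
  | leaf (a : α) : Iso (leaf a) (leaf a)
  | node {l₁ r₁ l₂ r₂ : LTree α} :
      Iso l₁ l₂ → Iso r₁ r₂ → Iso (node l₁ r₁) (node l₂ r₂)
  | swap {l₁ r₁ l₂ r₂ : LTree α} :
      Iso l₁ r₂ → Iso r₁ l₂ → Iso (node l₁ r₁) (node l₂ r₂)

/-- Equality of possibly empty trees (`none` is the empty tree). -/
def OptIso : Option (LTree α) → Option (LTree α) → Prop
  | none, none => True
  | some t₁, some t₂ => Iso t₁ t₂
  | _, _ => False

/-- Restriction `T|_S`: keep exactly the leaves with labels in `S`, suppressing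
the resulting degree-two vertices and degree-one roots; the result is `none`
when no leaf survives. -/
def restrict : LTree α → Finset α → Option (LTree α)
  | leaf a, S => if a ∈ S then some (leaf a) else none
  | node l r, S =>
    match restrict l S, restrict r S with
    | some l', some r' => some (node l' r')
    | some l', none => some l'
    | none, some r' => some r'
    | none, none => none

/-- `T − X`: remove from `T` every leaf whose label lies in `X`. -/
def remove (T : LTree α) (X : Finset α) : Option (LTree α) :=
  restrict T (labels T \ X)

/-- The leaf-removal distance `d_LR(T₁,T₂)`: the minimum number of labels
whose removal makes the two trees equal. -/
noncomputable def dLR (T₁ T₂ : LTree α) : ℕ :=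
  sInf {n | ∃ X : Finset α, X ⊆ labels T₁ ∪ labels T₂ ∧ X.card = n ∧
    OptIso (remove T₁ X) (remove T₂ X)}

def labelsO : Option (LTree α) → Finset α
  | none => ∅
  | some t => labels t

def GoodO : Option (LTree α) → Prop
  | none => True
  | some t => Good t

def restrictO : Option (LTree α) → Finset α → Option (LTree α)
  | none, _ => none
  | some t, S => restrict t S

/-- A family of (possibly empty) trees is compatible if there is a single tree,
on the union of their label sets, which displays all of them. -/
def CompatibleFamO {ι : Type*} (f : ι → Option (LTree α)) : Prop :=
  ∃ TO : Option (LTree α), GoodO TO ∧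
    (↑(labelsO TO) : Set α) = (⋃ i, ↑(labelsO (f i))) ∧
    ∀ i, OptIso (restrictO TO (labelsO (f i))) (f i)

/-- A family of trees is compatible if a single tree displays all of them. -/
def CompatibleFam {ι : Type*} (𝒯 : ι → LTree α) : Prop :=
  CompatibleFamO fun i => some (𝒯 i)

/-- `X` is a leaf-disagreement for the family `𝒯`: removing `X i` from `𝒯 i`
yields a compatible family. -/
def IsLeafDisagreement {ι : Type*} (𝒯 : ι → LTree α) (X : ι → Finset α) : Prop :=
  CompatibleFamO fun i => remove (𝒯 i) (X i)

/-- `X'` is a label-disagreement for the family `𝒯`. -/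
def IsLabelDisagreement {ι : Type*} (𝒯 : ι → LTree α) (X' : Finset α) : Prop :=
  CompatibleFamO fun i => remove (𝒯 i) X'

/-- `MASTRL 𝒯`: the minimum size of a leaf-disagreement for `𝒯`. -/
noncomputable def MASTRL {t : ℕ} (𝒯 : Fin t → LTree α) : ℕ :=
  sInf {v | ∃ X : Fin t → Finset α, (∀ i, X i ⊆ labels (𝒯 i)) ∧
    (∑ i, (X i).card) = v ∧ IsLeafDisagreement 𝒯 X}

/-- The triplet `ab|c` (as a tree). -/
def tripletTree (a b c : α) : LTree α := node (node (leaf a) (leaf b)) (leaf c)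

/-- A rooted triplet: a tree with exactly three (distinctly labeled) leaves. -/
def IsTriplet (R : LTree α) : Prop := Good R ∧ (labels R).card = 3

/-- `ab|c` is a triplet of `T`, i.e. `T|_{a,b,c} = ab|c`. -/
def IsTripletOf (T : LTree α) (a b c : α) : Prop :=
  OptIso (restrict T {a, b, c}) (some (tripletTree a b c))

/-- `tr(T)`: the triplet decomposition of `T`. -/
def trSet (T : LTree α) : Set (LTree α) :=
  {R | ∃ a b c : α, R = tripletTree a b c ∧ IsTripletOf T a b c}

/-- A set of trees is compatible: some tree on the union of the label sets
displays every member. -/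
def CompatibleSet (S : Set (LTree α)) : Prop :=
  ∃ TO : Option (LTree α), GoodO TO ∧
    (↑(labelsO TO) : Set α) = (⋃ R ∈ S, ↑(labels R)) ∧
    ∀ R ∈ S, OptIso (restrictO TO (labels R)) (some R)

/-- `MINRTI ℛ`: the minimum number of triplets to delete from `ℛ` so that the
remaining triplets are compatible. -/
noncomputable def MINRTI {t : ℕ} (R : Fin t → LTree α) : ℕ :=
  sInf {m | ∃ s : Finset (Fin t), s.card = m ∧
    CompatibleFam (fun i : {i : Fin t // i ∉ s} => R i.1)}

/-- Graft the leaf `x` at the position (edge) addressed by `p` in `T`.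
The empty address grafts `x` above the root of `T` (the `⊥` case); the address
of an internal/leaf vertex `v` grafts `x` on the edge between `v` and its
parent.  `none` when the address is invalid. -/
def graftAt (x : α) : LTree α → List Bool → Option (LTree α)
  | T, [] => some (node (leaf x) T)
  | leaf _, _ :: _ => none
  | node l r, b :: p =>
    if b then (graftAt x l p).map (fun l' => node l' r)
    else (graftAt x r p).map (fun r' => node l r')

/-- `T'` is obtained from `T` by a single LPR (leaf prune-and-regraft) move on
the leaf `x`: prune `x` from `T` and regraft it, either on an edge of
`T − {x}` or above its root. -/
def LPRStep (x : α) (T T' : LTree α) : Prop :=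
  (remove T {x} = none ∧ T' = leaf x) ∨
  ∃ T₀ p, remove T {x} = some T₀ ∧ graftAt x T₀ p = some T'

/-- `TurnsInto L T T'`: the LPR sequence with (ordered) leaf list `L` turns
`T` into `T'`. -/
inductive TurnsInto : List α → LTree α → LTree α → Prop
  | nil {T T' : LTree α} : Iso T T' → TurnsInto [] T T'
  | cons {x : α} {xs : List α} {T T'' T' : LTree α} :
      LPRStep x T T'' → TurnsInto xs T'' T' → TurnsInto (x :: xs) T T'

/-- `confset(T₁,T₂)`: the collection of 3-label sets `{a,b,c}` such that
`T₁` contains a triplet on `{a,b,c}` conflicting with a triplet of `T₂`. -/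
def confset (T₁ T₂ : LTree α) : Set (Finset α) :=
  {s | ∃ a b c : α, s = {a, b, c} ∧ IsTripletOf T₁ a b c ∧
    (IsTripletOf T₂ a c b ∨ IsTripletOf T₂ b c a)}

/-- `X` is a minimal disagreement between `T₁` and `T₂`. -/
def MinimalDisagreement (T₁ T₂ : LTree α) (X : Finset α) : Prop :=
  X ⊆ labels T₁ ∪ labels T₂ ∧
  OptIso (remove T₁ X) (remove T₂ X) ∧
  ∀ X' ⊂ X, ¬ OptIso (remove T₁ X') (remove T₂ X')

/-- `u` is (the rooted subtree hanging at) a node of `T`. -/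
inductive IsSubtree : LTree α → LTree α → Prop
  | refl (T : LTree α) : IsSubtree T T
  | left {u l r : LTree α} : IsSubtree u l → IsSubtree u (node l r)
  | right {u l r : LTree α} : IsSubtree u r → IsSubtree u (node l r)

/-- `u` is the least common ancestor in `T` of the labels in `Z`. -/
def IsLCA (T : LTree α) (Z : Finset α) (u : LTree α) : Prop :=
  IsSubtree u T ∧ Z ⊆ labels u ∧
    ∀ w, IsSubtree w T → Z ⊆ labels w → IsSubtree u w

end LTree

open LTree

/-!
Moving the leaves of `X` one after another above the root, along a duplicate-free
list of `X`, produces a tree that depends only on `T − X`. So if `T₁ − X = T₂ − X`,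
this sequence takes `T₁` and `T₂` to the same tree, and reversing the sequence
applied to `T₂` leads back to `T₂`: on a tree with distinct labels, an LPR move on `x`
can be undone by another move on `x`, because `x` can be regrafted on its old edge.
Conversely, an LPR move on `x` does not change `T − {x}`, so `T − S` does not change
along a sequence whose leaves all lie in `S`.
-/

namespace LTree

section Iso

variable {α : Type u}

theorem Iso.refl (T : LTree α) : Iso T T := by
  induction T with
  | leaf a => exact .leaf a
  | node _ _ ihl ihr => exact .node ihl ihr

theorem Iso.symm {T U : LTree α} (h : Iso T U) : Iso U T := by
  induction h with
  | leaf a => exact .leaf a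
  | node _ _ ih₁ ih₂ => exact .node ih₁ ih₂
  | swap _ _ ih₁ ih₂ => exact .swap ih₂ ih₁

theorem Iso.trans {T U V : LTree α} (h₁ : Iso T U) (h₂ : Iso U V) : Iso T V := by
  induction h₁ generalizing V with
  | leaf a => exact h₂
  | node _ _ ih₁ ih₂ =>
    cases h₂ with
    | node h₃ h₄ => exact .node (ih₁ h₃) (ih₂ h₄)
    | swap h₃ h₄ => exact .swap (ih₁ h₃) (ih₂ h₄)
  | swap _ _ ih₁ ih₂ =>
    cases h₂ with
    | node h₃ h₄ => exact .swap (ih₁ h₄) (ih₂ h₃)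
    | swap h₃ h₄ => exact .node (ih₁ h₄) (ih₂ h₃)

theorem Iso.exists_graftAt {x : α} {U T T' : LTree α} {p : List Bool} (hI : Iso U T)
    (h : graftAt x T p = some T') : ∃ q U', graftAt x U q = some U' ∧ Iso U' T' := by
  induction p generalizing U T T' with
  | nil =>
    simp only [graftAt, Option.some.injEq] at h
    subst h
    exact ⟨[], _, by simp [graftAt], .node (.leaf x) hI⟩
  | cons b p ih =>
    cases T with
    | leaf a => simp [graftAt] at h
    | node l r =>
      cases b <;> simp only [graftAt, Bool.false_eq_true, if_true, if_false,
          Option.map_eq_some_iff] at h <;> obtain ⟨t', ht', rfl⟩ := h <;> cases hI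
      case false.node h₁ h₂ =>
        obtain ⟨q, u', hq, hu⟩ := ih h₂ ht'
        exact ⟨false :: q, _, by simp [graftAt, hq], .node h₁ hu⟩
      case false.swap h₁ h₂ =>
        obtain ⟨q, u', hq, hu⟩ := ih h₂ ht'
        exact ⟨true :: q, _, by simp [graftAt, hq], .swap hu h₁⟩
      case true.node h₁ h₂ =>
        obtain ⟨q, u', hq, hu⟩ := ih h₁ ht'
        exact ⟨true :: q, _, by simp [graftAt, hq], .node hu h₂⟩
      case true.swap h₁ h₂ =>
        obtain ⟨q, u', hq, hu⟩ := ih h₁ ht'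
        exact ⟨false :: q, _, by simp [graftAt, hq], .swap h₂ hu⟩

theorem OptIso.refl (t : Option (LTree α)) : OptIso t t := by
  cases t
  · trivial
  · exact Iso.refl _

def graftRoot (x : α) : Option (LTree α) → LTree α
  | none => leaf x
  | some t => node (leaf x) t

theorem OptIso.iso_graftRoot {t u : Option (LTree α)} (h : OptIso t u) (x : α) :
    Iso (graftRoot x t) (graftRoot x u) := by
  cases t <;> cases u <;> simp only [OptIso] at h
  · exact .leaf x
  · exact .node (.leaf x) h

end Iso

variable {α : Type u} [DecidableEq α]

section Restrict

theorem labels_nonempty (T : LTree α) : (labels T).Nonempty := by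
  induction T with
  | leaf a => exact ⟨a, Finset.mem_singleton_self a⟩
  | node l r ihl _ => exact ihl.mono Finset.subset_union_left

theorem eq_leaf_of_labels_eq_singleton {T : LTree α} {x : α} (hg : Good T)
    (h : labels T = {x}) : T = leaf x := by
  cases T with
  | leaf a => simpa [labels] using h
  | node l r =>
    obtain ⟨-, -, hd⟩ := hg
    obtain ⟨y, hy⟩ := labels_nonempty l
    obtain ⟨z, hz⟩ := labels_nonempty r
    have hyz : y = z := by
      simp only [labels, Finset.eq_singleton_iff_unique_mem, Finset.mem_union] at h
      rw [h.2 y (.inl hy), h.2 z (.inr hz)]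
    exact absurd (hyz ▸ hz) (Finset.disjoint_left.mp hd hy)

theorem Iso.labels_eq {T U : LTree α} (h : Iso T U) : labels T = labels U := by
  induction h with
  | leaf a => rfl
  | node _ _ ih₁ ih₂ => simp [labels, ih₁, ih₂]
  | swap _ _ ih₁ ih₂ => simp [labels, ih₁, ih₂, Finset.union_comm]

theorem labelsO_restrict (T : LTree α) (S : Finset α) :
    labelsO (restrict T S) = labels T ∩ S := by
  induction T with
  | leaf a => by_cases h : a ∈ S <;> simp [restrict, labelsO, labels, h]
  | node l r ihl ihr =>
    simp only [restrict, labels, Finset.union_inter_distrib_right, ← ihl, ← ihr]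
    cases restrict l S <;> cases restrict r S <;> simp [labelsO, labels]

theorem restrict_congr (T : LTree α) {S S' : Finset α}
    (h : labels T ∩ S = labels T ∩ S') : restrict T S = restrict T S' := by
  induction T with
  | leaf a =>
    have := Finset.ext_iff.mp h a
    simp only [labels, Finset.mem_inter, Finset.mem_singleton, true_and] at this
    simp [restrict, this]
  | node l r ihl ihr =>
    have hl : labels l ∩ S = labels l ∩ S' := by
      simpa [labels, ← Finset.inter_assoc, Finset.inter_eq_left.mpr Finset.subset_union_left]
        using congrArg (labels l ∩ ·) h
    have hr : labels r ∩ S = labels r ∩ S' := by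
      simpa [labels, ← Finset.inter_assoc, Finset.inter_eq_left.mpr Finset.subset_union_right]
        using congrArg (labels r ∩ ·) h
    simp only [restrict, ihl hl, ihr hr]

theorem restrict_of_labels_subset {T : LTree α} {S : Finset α} (h : labels T ⊆ S) :
    restrict T S = some T := by
  induction T with
  | leaf a => simpa [restrict, labels] using h
  | node l r ihl ihr =>
    rw [labels, Finset.union_subset_iff] at h
    simp [restrict, ihl h.1, ihr h.2]

theorem restrictO_restrict (T : LTree α) (S S' : Finset α) :
    restrictO (restrict T S) S' = restrict T (S ∩ S') := by
  induction T with
  | leaf a => by_cases h : a ∈ S <;> by_cases h' : a ∈ S' <;> simp [restrict, restrictO, h, h']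
  | node l r ihl ihr =>
    simp only [restrict, ← ihl, ← ihr]
    cases restrict l S <;> cases restrict r S <;> simp only [restrictO, restrict] <;>
      split <;> simp_all

theorem good_restrict {T : LTree α} (hg : Good T) (S : Finset α) :
    GoodO (restrict T S) := by
  induction T with
  | leaf a => by_cases h : a ∈ S <;> simp [restrict, h, GoodO, Good]
  | node l r ihl ihr =>
    obtain ⟨gl, gr, hd⟩ := hg
    have hd' : Disjoint (labelsO (restrict l S)) (labelsO (restrict r S)) := by
      rw [labelsO_restrict, labelsO_restrict]
      exact hd.mono Finset.inter_subset_left Finset.inter_subset_left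
    have hl := ihl gl
    have hr := ihr gr
    revert hl hr hd'
    simp only [restrict]
    cases restrict l S <;> cases restrict r S <;> simp_all [GoodO, Good, labelsO]

theorem Iso.restrict {T U : LTree α} (h : Iso T U) (S : Finset α) :
    OptIso (restrict T S) (restrict U S) := by
  induction h with
  | leaf a => exact OptIso.refl _
  | @node l₁ r₁ l₂ r₂ _ _ ih₁ ih₂ =>
    revert ih₁ ih₂
    simp only [LTree.restrict]
    cases LTree.restrict l₁ S <;> cases LTree.restrict r₁ S <;>
      cases LTree.restrict l₂ S <;> cases LTree.restrict r₂ S <;>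
      simp +contextual [OptIso, Iso.node]
  | @swap l₁ r₁ l₂ r₂ _ _ ih₁ ih₂ =>
    revert ih₁ ih₂
    simp only [LTree.restrict]
    cases LTree.restrict l₁ S <;> cases LTree.restrict r₁ S <;>
      cases LTree.restrict l₂ S <;> cases LTree.restrict r₂ S <;>
      simp +contextual [OptIso, Iso.swap]

end Restrict

section Remove

theorem remove_empty (T : LTree α) : remove T ∅ = some T :=
  restrict_of_labels_subset (by simp)

theorem labelsO_remove (T : LTree α) (X : Finset α) :
    labelsO (remove T X) = labels T \ X := by
  rw [remove, labelsO_restrict, Finset.inter_eq_right.mpr Finset.sdiff_subset]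

theorem labels_of_remove_eq_some {T T₀ : LTree α} {X : Finset α}
    (h : remove T X = some T₀) : labels T₀ = labels T \ X := by
  simpa [h, labelsO] using labelsO_remove T X

theorem labels_eq_singleton_of_remove_eq_none {T : LTree α} {x : α} (hx : x ∈ labels T)
    (h : remove T {x} = none) : labels T = {x} := by
  have : labels T \ {x} = ∅ := by simpa [h, labelsO] using (labelsO_remove T {x}).symm
  exact (Finset.sdiff_eq_empty_iff_subset.mp this).antisymm (Finset.singleton_subset_iff.mpr hx)

theorem good_of_remove_eq_some {T T₀ : LTree α} {X : Finset α} (hg : Good T)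
    (h : remove T X = some T₀) : Good T₀ := by
  have := good_restrict hg (labels T \ X)
  rwa [← remove, h] at this

theorem remove_union (T : LTree α) (S S' : Finset α) :
    remove T (S ∪ S') = (remove T S).bind (remove · S') := by
  have key := restrictO_restrict T (labels T \ S) (labels T \ S')
  rw [← Finset.sdiff_union_distrib, ← remove] at key
  rw [remove, ← key]
  cases h : remove T S with
  | none => rfl
  | some t =>
    apply restrict_congr
    rw [labels_of_remove_eq_some h]
    ext y
    simp only [Finset.mem_inter, Finset.mem_sdiff]
    tauto

theorem remove_insert (T : LTree α) (x : α) (S : Finset α) :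
    remove T (insert x S) = (remove T {x}).bind (remove · S) := by
  rw [Finset.insert_eq, remove_union]

theorem Iso.remove {T U : LTree α} (h : Iso T U) (X : Finset α) :
    OptIso (remove T X) (remove U X) := by
  rw [LTree.remove, LTree.remove, ← h.labels_eq]
  exact h.restrict _

end Remove

section Graft

variable {x : α}

theorem labels_graftAt {T T' : LTree α} {p : List Bool} (h : graftAt x T p = some T') :
    labels T' = insert x (labels T) := by
  induction p generalizing T T' with
  | nil =>
    simp only [graftAt, Option.some.injEq] at h
    subst h
    simp [labels]
  | cons b p ih =>
    cases T with
    | leaf a => simp [graftAt] at h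
    | node l r =>
      cases b <;> simp only [graftAt, Bool.false_eq_true, if_true, if_false,
          Option.map_eq_some_iff] at h <;> obtain ⟨t', ht', rfl⟩ := h <;>
        simp [labels, ih ht', Finset.insert_union, Finset.union_insert]

theorem good_graftAt {T T' : LTree α} {p : List Bool} (h : graftAt x T p = some T')
    (hg : Good T) (hx : x ∉ labels T) : Good T' := by
  induction p generalizing T T' with
  | nil =>
    simp only [graftAt, Option.some.injEq] at h
    subst h
    exact ⟨trivial, hg, by simpa [labels] using hx⟩
  | cons b p ih =>
    cases T with
    | leaf a => simp [graftAt] at h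
    | node l r =>
      obtain ⟨gl, gr, hd⟩ := hg
      simp only [labels, Finset.mem_union, not_or] at hx
      cases b <;> simp only [graftAt, Bool.false_eq_true, if_true, if_false,
          Option.map_eq_some_iff] at h <;> obtain ⟨t', ht', rfl⟩ := h
      · exact ⟨gl, ih ht' gr hx.2, by simpa [labels_graftAt ht', hx.1] using hd⟩
      · exact ⟨ih ht' gl hx.1, gr, by simpa [labels_graftAt ht', hx.2] using hd⟩

theorem restrict_graftAt {T T' : LTree α} {p : List Bool} {S : Finset α}
    (h : graftAt x T p = some T') (hx : x ∉ S) (hT : labels T ⊆ S) :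
    restrict T' S = some T := by
  induction p generalizing T T' with
  | nil =>
    simp only [graftAt, Option.some.injEq] at h
    subst h
    simp [restrict, hx, restrict_of_labels_subset hT]
  | cons b p ih =>
    cases T with
    | leaf a => simp [graftAt] at h
    | node l r =>
      rw [labels, Finset.union_subset_iff] at hT
      cases b <;> simp only [graftAt, Bool.false_eq_true, if_true, if_false,
          Option.map_eq_some_iff] at h <;> obtain ⟨t', ht', rfl⟩ := h
      · simp [restrict, restrict_of_labels_subset hT.1, ih ht' hT.2]
      · simp [restrict, restrict_of_labels_subset hT.2, ih ht' hT.1]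

theorem remove_graftAt {T T' : LTree α} {p : List Bool} (h : graftAt x T p = some T')
    (hx : x ∉ labels T) : remove T' {x} = some T := by
  rw [remove, labels_graftAt h, Finset.insert_sdiff_of_mem _ (Finset.mem_singleton_self x),
    Finset.sdiff_singleton_eq_erase, Finset.erase_eq_of_notMem hx]
  exact restrict_graftAt h hx le_rfl

theorem eq_leaf_of_restrict_eq_none {T : LTree α} {S : Finset α} (hg : Good T)
    (hx : x ∈ labels T) (hS : labels T \ {x} ⊆ S) (h : restrict T S = none) : T = leaf x := by
  have hempty : labels T ∩ S = ∅ := by simpa [h, labelsO] using (labelsO_restrict T S).symm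
  refine eq_leaf_of_labels_eq_singleton hg (Finset.Subset.antisymm (fun y hy => ?_)
    (Finset.singleton_subset_iff.mpr hx))
  by_contra hyx
  have hy' : y ∈ labels T ∩ S := Finset.mem_inter.mpr ⟨hy, hS (by simpa [hy] using hyx)⟩
  simp [hempty] at hy'

theorem exists_graftAt_of_restrict {T T₀ : LTree α} {S : Finset α} (hg : Good T)
    (hx : x ∈ labels T) (hS : labels T \ {x} ⊆ S) (hxS : x ∉ S)
    (h : restrict T S = some T₀) : ∃ p T', graftAt x T₀ p = some T' ∧ Iso T' T := by
  induction T generalizing T₀ with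
  | leaf a =>
    rw [labels, Finset.mem_singleton] at hx
    subst hx
    simp [restrict, hxS] at h
  | node l r ihl ihr =>
    obtain ⟨gl, gr, hd⟩ := hg
    have hSl : labels l \ {x} ⊆ S :=
      (Finset.sdiff_subset_sdiff Finset.subset_union_left le_rfl).trans hS
    have hSr : labels r \ {x} ⊆ S :=
      (Finset.sdiff_subset_sdiff Finset.subset_union_right le_rfl).trans hS
    rcases Finset.mem_union.mp hx with hxl | hxr
    · have hr : restrict r S = some r := by
        rw [Finset.sdiff_singleton_eq_erase,
          Finset.erase_eq_of_notMem (Finset.disjoint_left.mp hd hxl)] at hSr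
        exact restrict_of_labels_subset hSr
      cases hl : restrict l S with
      | none =>
        obtain rfl := eq_leaf_of_restrict_eq_none gl hxl hSl hl
        simp only [restrict, hxS, if_false, hr, Option.some.injEq] at h
        subst h
        exact ⟨[], _, by simp [graftAt], .refl _⟩
      | some l₀ =>
        simp only [restrict, hl, hr, Option.some.injEq] at h
        subst h
        obtain ⟨p, l', hp, hl'⟩ := ihl gl hxl hSl hl
        exact ⟨true :: p, _, by simp [graftAt, hp], .node hl' (.refl r)⟩
    · have hl : restrict l S = some l := by
        rw [Finset.sdiff_singleton_eq_erase,
          Finset.erase_eq_of_notMem (Finset.disjoint_right.mp hd hxr)] at hSl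
        exact restrict_of_labels_subset hSl
      cases hr : restrict r S with
      | none =>
        obtain rfl := eq_leaf_of_restrict_eq_none gr hxr hSr hr
        simp only [restrict, hxS, if_false, hl, Option.some.injEq] at h
        subst h
        -- grafting above the root puts `x` on the left, so only `Iso` can be recovered
        exact ⟨[], _, by simp [graftAt], .swap (.leaf x) (.refl _)⟩
      | some r₀ =>
        simp only [restrict, hl, hr, Option.some.injEq] at h
        subst h
        obtain ⟨p, r', hp, hr'⟩ := ihr gr hxr hSr hr
        exact ⟨false :: p, _, by simp [graftAt, hp], .node (.refl l) hr'⟩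

end Graft

section LPR

variable {x : α}

theorem eq_leaf_of_remove_eq_none {T : LTree α} (hg : Good T) (hx : x ∈ labels T)
    (h : remove T {x} = none) : T = leaf x :=
  eq_leaf_of_restrict_eq_none hg hx le_rfl h

theorem notMem_labels_of_remove_eq_some {T T₀ : LTree α} (h : remove T {x} = some T₀) :
    x ∉ labels T₀ := by
  simp [labels_of_remove_eq_some h]

theorem LPRStep.labels_eq {T T' : LTree α} (hx : x ∈ labels T) (h : LPRStep x T T') :
    labels T' = labels T := by
  rcases h with ⟨hT, rfl⟩ | ⟨T₀, p, hT, hp⟩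
  · exact (labels_eq_singleton_of_remove_eq_none hx hT).symm
  · rw [labels_graftAt hp, labels_of_remove_eq_some hT, Finset.insert_sdiff_self_of_mem hx]

theorem LPRStep.good {T T' : LTree α} (hg : Good T) (h : LPRStep x T T') : Good T' := by
  rcases h with ⟨-, rfl⟩ | ⟨T₀, p, hT, hp⟩
  · trivial
  · exact good_graftAt hp (good_of_remove_eq_some hg hT) (notMem_labels_of_remove_eq_some hT)

theorem LPRStep.remove_singleton {T T' : LTree α} (h : LPRStep x T T') :
    remove T' {x} = remove T {x} := by
  rcases h with ⟨hT, rfl⟩ | ⟨T₀, p, hT, hp⟩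
  · rw [hT]
    simp [remove, restrict, labels]
  · rw [hT, remove_graftAt hp (notMem_labels_of_remove_eq_some hT)]

theorem LPRStep.remove_eq {T T' : LTree α} {S : Finset α} (h : LPRStep x T T') (hx : x ∈ S) :
    remove T' S = remove T S := by
  rw [← Finset.insert_eq_of_mem hx, remove_insert, remove_insert, h.remove_singleton]

theorem LPRStep.exists_of_iso {U T T' : LTree α} (hI : Iso U T) (h : LPRStep x T T') :
    ∃ U', LPRStep x U U' ∧ Iso U' T' := by
  have hrem := hI.remove {x}
  rcases h with ⟨hT, rfl⟩ | ⟨T₀, p, hT, hp⟩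
  · cases hU : remove U {x}
    · exact ⟨leaf x, .inl ⟨hU, rfl⟩, .refl _⟩
    · simp [hU, hT, OptIso] at hrem
  · rw [hT] at hrem
    cases hU : remove U {x} with
    | none => simp [hU, OptIso] at hrem
    | some U₀ =>
      rw [hU] at hrem
      obtain ⟨q, U', hq, hU'⟩ := Iso.exists_graftAt hrem hp
      exact ⟨U', .inr ⟨U₀, q, hU, hq⟩, hU'⟩

theorem LPRStep.exists_reverse {T T' : LTree α} (hg : Good T) (hx : x ∈ labels T)
    (h : LPRStep x T T') : ∃ T'', LPRStep x T' T'' ∧ Iso T'' T := by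
  rcases h with ⟨hT, rfl⟩ | ⟨T₀, p, hT, hp⟩
  · obtain rfl := eq_leaf_of_remove_eq_none hg hx hT
    exact ⟨leaf x, .inl ⟨hT, rfl⟩, .refl _⟩
  · obtain ⟨q, T'', hq, hT''⟩ := exists_graftAt_of_restrict hg hx le_rfl (by simp) hT
    have hback : remove T' {x} = some T₀ :=
      remove_graftAt hp (notMem_labels_of_remove_eq_some hT)
    exact ⟨T'', .inr ⟨T₀, q, hback, hq⟩, hT''⟩

end LPR

section TurnsInto

theorem TurnsInto.iso_left {L : List α} {U T T' : LTree α} (hI : Iso U T)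
    (h : TurnsInto L T T') : TurnsInto L U T' := by
  induction h generalizing U with
  | nil h => exact .nil (hI.trans h)
  | cons hs _ ih =>
    obtain ⟨U', hs', hU'⟩ := hs.exists_of_iso hI
    exact .cons hs' (ih hU')

theorem TurnsInto.iso_right {L : List α} {T T' T'' : LTree α} (h : TurnsInto L T T')
    (hI : Iso T' T'') : TurnsInto L T T'' := by
  induction h with
  | nil h => exact .nil (h.trans hI)
  | cons hs _ ih => exact .cons hs (ih hI)

theorem TurnsInto.append {L₁ L₂ : List α} {T T' T'' : LTree α} (h₁ : TurnsInto L₁ T T')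
    (h₂ : TurnsInto L₂ T' T'') : TurnsInto (L₁ ++ L₂) T T'' := by
  induction h₁ with
  | nil h => exact h₂.iso_left h
  | cons hs _ ih => exact .cons hs (ih h₂)

theorem TurnsInto.reverse {L : List α} {T T' : LTree α} (hg : Good T)
    (hL : ∀ x ∈ L, x ∈ labels T) (h : TurnsInto L T T') : TurnsInto L.reverse T' T := by
  induction h with
  | nil h => exact .nil h.symm
  | @cons x xs T T'' T' hs _ ih =>
    have hx : x ∈ labels T := hL x List.mem_cons_self
    have hback := ih (hs.good hg) fun y hy => hs.labels_eq hx ▸ hL y (List.mem_cons_of_mem x hy)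
    obtain ⟨T₃, hs', hT₃⟩ := hs.exists_reverse hg hx
    rw [List.reverse_cons]
    exact (hback.append (.cons hs' (.nil (.refl _)))).iso_right hT₃

theorem TurnsInto.optIso_remove {L : List α} {T T' : LTree α} (h : TurnsInto L T T')
    {S : Finset α} (hS : L.toFinset ⊆ S) : OptIso (remove T S) (remove T' S) := by
  induction h with
  | nil h => exact h.remove S
  | cons hs _ ih =>
    rw [List.toFinset_cons, Finset.insert_subset_iff] at hS
    rw [← hs.remove_eq hS.1]
    exact ih hS.2

end TurnsInto

section Park

def regraftAtRoot : List α → LTree α → LTree α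
  | [], T => T
  | x :: l, T => regraftAtRoot l (graftRoot x (remove T {x}))

theorem lprStep_graftRoot_remove (x : α) (T : LTree α) :
    LPRStep x T (graftRoot x (remove T {x})) := by
  cases h : remove T {x} with
  | none => exact .inl ⟨h, rfl⟩
  | some T₀ => exact .inr ⟨T₀, [], h, by simp [graftAt, graftRoot]⟩

theorem turnsInto_regraftAtRoot (l : List α) (T : LTree α) :
    TurnsInto l T (regraftAtRoot l T) := by
  induction l generalizing T with
  | nil => exact .nil (.refl T)
  | cons x l ih => exact .cons (lprStep_graftRoot_remove x T) (ih _)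

theorem remove_graftRoot {x : α} {t : Option (LTree α)} {S : Finset α} (hxS : x ∉ S)
    (hx : x ∉ labelsO t) :
    remove (graftRoot x t) S = some (graftRoot x (t.bind (remove · S))) := by
  cases t with
  | none => simp [graftRoot, remove, restrict, labels, hxS]
  | some t =>
    have ht : restrict t (labels (node (leaf x) t) \ S) = remove t S := by
      apply restrict_congr
      ext y
      by_cases hy : y = x <;> simp_all [labels, labelsO]
    have hxmem : x ∈ labels (node (leaf x) t) \ S := by simp [labels, hxS]
    change restrict (node (leaf x) t) (labels (node (leaf x) t) \ S) = _
    simp only [graftRoot, restrict, ht, hxmem, if_true, Option.bind_some]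
    cases remove t S <;> rfl

theorem regraftAtRoot_iso {l : List α} (hl : l.Nodup) {T U : LTree α}
    (h : OptIso (remove T l.toFinset) (remove U l.toFinset)) :
    Iso (regraftAtRoot l T) (regraftAtRoot l U) := by
  induction l generalizing T U with
  | nil => simpa [regraftAtRoot, remove_empty, OptIso] using h
  | cons x l ih =>
    rw [List.nodup_cons] at hl
    have hxT : x ∉ labelsO (remove T {x}) := by simp [labelsO_remove]
    have hxU : x ∉ labelsO (remove U {x}) := by simp [labelsO_remove]
    apply ih hl.2
    have hx : x ∉ l.toFinset := by simpa using hl.1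
    rw [remove_graftRoot hx hxT, remove_graftRoot hx hxU, ← remove_insert, ← remove_insert]
    rw [List.toFinset_cons] at h
    exact h.iso_graftRoot x

end Park

end LTree

theorem lpr_sequence_equiv_general {α : Type u} [DecidableEq α] (𝒳 : Finset α)
    (T₁ T₂ : LTree α) (h₂ : IsTreeOn T₂ 𝒳)
    (X : Finset α) (hX : X ⊆ 𝒳) :
    OptIso (remove T₁ X) (remove T₂ X) ↔
      ∃ L : List α, TurnsInto L T₁ T₂ ∧ L.toFinset = X := by
  constructor
  · intro h
    have hsame : Iso (regraftAtRoot X.toList T₁) (regraftAtRoot X.toList T₂) :=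
      regraftAtRoot_iso X.nodup_toList (by simpa using h)
    have hback : TurnsInto X.toList.reverse (regraftAtRoot X.toList T₂) T₂ :=
      (turnsInto_regraftAtRoot X.toList T₂).reverse h₂.1
        fun x hx => h₂.2 ▸ hX (Finset.mem_toList.mp hx)
    exact ⟨X.toList ++ X.toList.reverse,
      (turnsInto_regraftAtRoot X.toList T₁).append (hback.iso_left hsame), by simp⟩
  · rintro ⟨L, hL, rfl⟩
    exact hL.optIso_remove le_rfl

/-- Lemma 12 of the paper.  For trees `T₁, T₂` on the same
label set `𝒳` and `X ⊆ 𝒳`: `T₁ − X = T₂ − X` iff there is an LPR sequence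
`(x₁,…,x_k)` turning `T₁` into `T₂` with `X = {x₁,…,x_k}`. -/
theorem lpr_sequence_equiv {α : Type u} [DecidableEq α] (𝒳 : Finset α)
    (T₁ T₂ : LTree α) (h₁ : IsTreeOn T₁ 𝒳) (h₂ : IsTreeOn T₂ 𝒳)
    (X : Finset α) (hX : X ⊆ 𝒳) :
    OptIso (remove T₁ X) (remove T₂ X) ↔
      ∃ L : List α, TurnsInto L T₁ T₂ ∧ L.toFinset = X :=
  lpr_sequence_equiv_general 𝒳 T₁ T₂ h₂ X hX
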